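/- For any suitably summable sequences a, b: ℤ → ℝ and Δx > 0, one has ⟨D₊D₋(a), D(ab)⟩ = -(1/Δx²) ⟨D₊(b), a·𝒮⁺a⟩ + (1/Δx²) ⟨D(b), 𝒮⁻a·𝒮⁺a⟩. -/

import Mathlib

noncomputable section
def Dp (Δx : ℝ) (a : ℤ → ℝ) : ℤ → ℝ := fun j => (a (j + 1) - a j) / Δx
def Dm (Δx : ℝ) (a : ℤ → ℝ) : ℤ → ℝ := fun j => (a j - a (j - 1)) / Δx
def Dc (Δx : ℝ) (a : ℤ → ℝ) : ℤ → ℝ := fun j => (a (j + 1) - a (j - 1)) / (2 * Δx)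
def ip (Δx : ℝ) (u v : ℤ → ℝ) : ℝ := Δx * ∑' j : ℤ, u j * v j

/-! After pulling the mesh factors out of the sums, the summand of the left-hand side differs
from the two right-hand summands by the telescoping differences `f (j + 1) - f (j - 1)` of
`f j = a j ^ 2 * b j` and `g (j - 1) - g j` of `g j = a j * a (j + 1) * b j`. Their sums vanish
because every cubic term `a · a · b` is summable: products of `ℓ²` sequences are summable and
`b ∈ ℓ²` is bounded. -/

theorem Summable.hasSum_comp_sub_comp_equiv {α β γ : Type*} [AddCommGroup α] [TopologicalSpace α]
    [IsTopologicalAddGroup α] {f : β → α} (hf : Summable f) (e₁ e₂ : γ ≃ β) :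
    HasSum (fun c => f (e₁ c) - f (e₂ c)) 0 := by
  simpa using (e₁.hasSum_iff.2 hf.hasSum).sub (e₂.hasSum_iff.2 hf.hasSum)

theorem Summable.mul_of_summable_sq {ι : Type*} {u v : ι → ℝ} (hu : Summable fun i => u i ^ 2)
    (hv : Summable fun i => v i ^ 2) : Summable fun i => u i * v i := by
  refine .of_norm_bounded (hu.add hv) fun i => ?_
  rw [Real.norm_eq_abs, abs_mul]
  nlinarith [two_mul_le_add_sq |u i| |v i|, sq_abs (u i), sq_abs (v i), abs_nonneg (u i),
    abs_nonneg (v i)]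

theorem Summable.mul_of_abs_le {ι : Type*} {f g : ι → ℝ} (hf : Summable f) {C : ℝ}
    (hg : ∀ i, |g i| ≤ C) : Summable fun i => f i * g i := by
  refine .of_norm_bounded (hf.abs.mul_right C) fun i => ?_
  rw [Real.norm_eq_abs, abs_mul]
  exact mul_le_mul_of_nonneg_left (hg i) (abs_nonneg _)

theorem abs_le_sqrt_tsum_sq {ι : Type*} {b : ι → ℝ} (hb : Summable fun i => b i ^ 2) (i : ι) :
    |b i| ≤ √(∑' i, b i ^ 2) := by
  rw [← Real.sqrt_sq_eq_abs]
  exact Real.sqrt_le_sqrt (hb.le_tsum i fun j _ => sq_nonneg (b j))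

theorem tsum_secondDiff_mul_centralDiff {a b : ℤ → ℝ} (ha : Summable fun j => a j ^ 2)
    (hb : Summable fun j => b j ^ 2) :
    ∑' j, (a (j + 1) - 2 * a j + a (j - 1)) * (a (j + 1) * b (j + 1) - a (j - 1) * b (j - 1))
      = -2 * ∑' j, a j * a (j + 1) * (b (j + 1) - b j)
        + ∑' j, a (j - 1) * a (j + 1) * (b (j + 1) - b (j - 1)) := by
  obtain ⟨C, hbC⟩ : ∃ C, ∀ j, |b j| ≤ C := ⟨_, abs_le_sqrt_tsum_sq hb⟩
  have hdiff (k l : ℤ) : ∀ j, |b (j + k) - b (j + l)| ≤ 2 * C := fun j =>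
    (abs_sub _ _).trans (by linarith [hbC (j + k), hbC (j + l)])
  have hprod (e₁ e₂ : ℤ ≃ ℤ) : Summable fun j => a (e₁ j) * a (e₂ j) :=
    .mul_of_summable_sq (e₁.summable_iff.2 ha) (e₂.summable_iff.2 ha)
  have hS₁ : Summable fun j => a j * a (j + 1) * (b (j + 1) - b j) := by
    simpa using (hprod (.refl ℤ) (.addRight 1)).mul_of_abs_le (by simpa using hdiff 1 0)
  have hS₂ : Summable fun j => a (j - 1) * a (j + 1) * (b (j + 1) - b (j - 1)) := by
    simpa [sub_eq_add_neg] using (hprod (.subRight 1) (.addRight 1)).mul_of_abs_le (hdiff 1 (-1))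
  have hf : Summable fun j => a j * a j * b j :=
    (hprod (.refl ℤ) (.refl ℤ)).mul_of_abs_le hbC
  have hg : Summable fun j => a j * a (j + 1) * b j :=
    (hprod (.refl ℤ) (.addRight 1)).mul_of_abs_le hbC
  have hsplit : ∀ j,
      (a (j + 1) - 2 * a j + a (j - 1)) * (a (j + 1) * b (j + 1) - a (j - 1) * b (j - 1))
      = -2 * (a j * a (j + 1) * (b (j + 1) - b j))
        + a (j - 1) * a (j + 1) * (b (j + 1) - b (j - 1))
        + (a (j + 1) * a (j + 1) * b (j + 1) - a (j - 1) * a (j - 1) * b (j - 1))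
        + 2 * (a (j - 1) * a (j - 1 + 1) * b (j - 1) - a j * a (j + 1) * b j) := by
    intro j; rw [sub_add_cancel]; ring
  have hsum := (((hS₁.hasSum.mul_left (-2)).add hS₂.hasSum).add
    (hf.hasSum_comp_sub_comp_equiv (.addRight 1) (.subRight 1))).add
    ((hg.hasSum_comp_sub_comp_equiv (.subRight 1) (.refl ℤ)).mul_left 2)
  rw [funext hsplit]
  exact hsum.tsum_eq.trans (by ring)

theorem stmt12_general (Δx : ℝ) (a b : ℤ → ℝ)
    (ha : Summable fun j : ℤ => (a j) ^ 2) (hb : Summable fun j : ℤ => (b j) ^ 2) :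
    ip Δx (Dp Δx (Dm Δx a)) (Dc Δx (fun i => a i * b i))
      = -(1 / Δx ^ 2) * ip Δx (Dp Δx b) (fun j => a j * a (j + 1))
        + (1 / Δx ^ 2) * ip Δx (Dc Δx b) (fun j => a (j - 1) * a (j + 1)) := by
  have hL : ip Δx (Dp Δx (Dm Δx a)) (Dc Δx (fun i => a i * b i))
      = Δx * ((Δx ^ 3 * 2)⁻¹ * ∑' j,
         (a (j + 1) - 2 * a j + a (j - 1)) * (a (j + 1) * b (j + 1) - a (j - 1) * b (j - 1))) := by
    rw [← tsum_mul_left]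
    exact congrArg _ (tsum_congr fun j => by simp only [Dp, Dm, Dc, add_sub_cancel_right]; ring)
  have hR₁ : ip Δx (Dp Δx b) (fun j => a j * a (j + 1))
      = Δx * (Δx⁻¹ * ∑' j, a j * a (j + 1) * (b (j + 1) - b j)) := by
    rw [← tsum_mul_left]; exact congrArg _ (tsum_congr fun j => by simp only [Dp]; ring)
  have hR₂ : ip Δx (Dc Δx b) (fun j => a (j - 1) * a (j + 1))
      = Δx * ((2 * Δx)⁻¹ * ∑' j, a (j - 1) * a (j + 1) * (b (j + 1) - b (j - 1))) := by
    rw [← tsum_mul_left]; exact congrArg _ (tsum_congr fun j => by simp only [Dc]; ring)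
  rw [hL, hR₁, hR₂, tsum_secondDiff_mul_centralDiff ha hb]
  ring

/-- `⟨D₊D₋(a), D(ab)⟩ = -(1/Δx²)⟨D₊(b), a·𝒮⁺a⟩ + (1/Δx²)⟨D(b), 𝒮⁻a·𝒮⁺a⟩`. -/
theorem stmt12 (Δx : ℝ) (hΔx : 0 < Δx) (a b : ℤ → ℝ)
    (ha : Summable fun j : ℤ => (a j) ^ 2) (hb : Summable fun j : ℤ => (b j) ^ 2) :
    ip Δx (Dp Δx (Dm Δx a)) (Dc Δx (fun i => a i * b i))
      = -(1 / Δx ^ 2) * ip Δx (Dp Δx b) (fun j => a j * a (j + 1))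
        + (1 / Δx ^ 2) * ip Δx (Dc Δx b) (fun j => a (j - 1) * a (j + 1)) :=
  stmt12_general Δx a b ha hb
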